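/- The approximated potential lies below the original potential: for every λ > 0 and every r ∈ ℝ, Ψ_λ(r) ≤ Ψ(r). -/

import Mathlib

/-!
Write `γ = Ψ' + C·id`, which is nondecreasing with `γ 0 = 0`, and `J` for its resolvent. The
Yosida approximation is `γ ∘ J`, and `J s` lies between `0` and `s`; by monotonicity of `γ`,
`γ (J s) ≤ γ s` for `s ≥ 0` and `γ (J s) ≥ γ s` for `s ≤ 0`. Integrating from `0` to `r`, in
either orientation, gives `∫₀^r γ ∘ J ≤ ∫₀^r γ = Ψ r - Ψ 0 + C r² / 2`.
-/

open Set intervalIntegral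

def IsResolvent (g : ℝ → ℝ) (l : ℝ) (j : ℝ → ℝ) : Prop :=
  ∀ s, j s + l * g (j s) = s

namespace IsResolvent

variable {g j : ℝ → ℝ} {l : ℝ}

theorem sub_div_eq (hj : IsResolvent g l j) (hl : l ≠ 0) (s : ℝ) :
    (s - j s) / l = g (j s) := by
  rw [div_eq_iff hl]
  linarith [hj s]

variable (hg : Monotone g) (hl : 0 ≤ l)
include hg hl

theorem monotone (hj : IsResolvent g l j) : Monotone j := by
  intro a b hab
  by_contra! hlt
  have := mul_le_mul_of_nonneg_left (hg hlt.le) hl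
  linarith [hj a, hj b]

variable (hg0 : g 0 = 0)
include hg0

theorem mem_Icc_of_nonneg (hj : IsResolvent g l j) {s : ℝ} (hs : 0 ≤ s) : j s ∈ Icc 0 s := by
  have hjs : 0 ≤ j s := by
    by_contra! hneg
    have := mul_nonpos_of_nonneg_of_nonpos hl (hg0 ▸ hg hneg.le)
    linarith [hj s]
  have := mul_nonneg hl (hg0 ▸ hg hjs)
  exact ⟨hjs, by linarith [hj s]⟩

theorem mem_Icc_of_nonpos (hj : IsResolvent g l j) {s : ℝ} (hs : s ≤ 0) : j s ∈ Icc s 0 := by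
  have hjs : j s ≤ 0 := by
    by_contra! hpos
    have := mul_nonneg hl (hg0 ▸ hg hpos.le)
    linarith [hj s]
  have := mul_nonpos_of_nonneg_of_nonpos hl (hg0 ▸ hg hjs)
  exact ⟨by linarith [hj s], hjs⟩

theorem comp_le_of_nonneg (hj : IsResolvent g l j) {s : ℝ} (hs : 0 ≤ s) : g (j s) ≤ g s :=
  hg (hj.mem_Icc_of_nonneg hg hl hg0 hs).2

theorem le_comp_of_nonpos (hj : IsResolvent g l j) {s : ℝ} (hs : s ≤ 0) : g s ≤ g (j s) :=
  hg (hj.mem_Icc_of_nonpos hg hl hg0 hs).1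

end IsResolvent

theorem intervalIntegral.integral_le_of_le_of_nonneg_of_le_of_nonpos {f g : ℝ → ℝ} {r : ℝ}
    (hf : IntervalIntegrable f MeasureTheory.volume 0 r)
    (hg : IntervalIntegrable g MeasureTheory.volume 0 r)
    (hpos : ∀ s, 0 ≤ s → f s ≤ g s) (hneg : ∀ s, s ≤ 0 → g s ≤ f s) :
    ∫ s in (0:ℝ)..r, f s ≤ ∫ s in (0:ℝ)..r, g s := by
  rcases le_total 0 r with hr | hr
  · exact integral_mono_on hr hf hg fun s hs => hpos s hs.1
  · have := integral_mono_on hr hg.symm hf.symm fun s hs => hneg s hs.2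
    rw [integral_symm 0 r, integral_symm 0 r] at this
    linarith

theorem monotone_deriv_add_mul_id {Ψ : ℝ → ℝ} {C : ℝ} (hΨ : Differentiable ℝ (deriv Ψ))
    (hΨ'' : ∀ x, -C ≤ deriv (deriv Ψ) x) : Monotone fun x => deriv Ψ x + C * x := by
  refine monotone_of_deriv_nonneg (hΨ.add (differentiable_id.const_mul C)) fun x => ?_
  have hderiv : HasDerivAt (fun x => deriv Ψ x + C * x) (deriv (deriv Ψ) x + C * 1) x :=
    (hΨ x).hasDerivAt.add ((hasDerivAt_id x).const_mul C)
  rw [hderiv.deriv]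
  linarith [hΨ'' x]

theorem integral_deriv_add_mul_id {Ψ : ℝ → ℝ} (C : ℝ) (hΨ : ContDiff ℝ 1 Ψ) (a b : ℝ) :
    ∫ s in a..b, (deriv Ψ s + C * s) = Ψ b - Ψ a + C / 2 * (b ^ 2 - a ^ 2) := by
  have hcont : Continuous (deriv Ψ) := hΨ.continuous_deriv le_rfl
  have hlin : Continuous fun s : ℝ => C * s := by fun_prop
  rw [integral_add (hcont.intervalIntegrable a b) (hlin.intervalIntegrable a b),
    integral_deriv_eq_sub (fun x _ => hΨ.differentiable one_ne_zero x)
      (hcont.intervalIntegrable a b),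
    integral_const_mul, integral_id]
  ring

theorem approx_potential_le_general
    (Ψ : ℝ → ℝ) (C : ℝ)
    (hΨ : ContDiff ℝ 2 Ψ) (hΨ'0 : deriv Ψ 0 = 0)
    (hΨ'' : ∀ x : ℝ, -C ≤ deriv (deriv Ψ) x)
    (J : ℝ → ℝ → ℝ)
    (hJ : ∀ l : ℝ, 0 < l → ∀ r : ℝ,
      J l r + l * (deriv Ψ (J l r) + C * J l r) = r)
    (l : ℝ) (hl : 0 < l) (r : ℝ) :
    Ψ 0 - C / 2 * r ^ 2 + (∫ s in (0:ℝ)..r, (s - J l s) / l) ≤ Ψ r := by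
  set γ : ℝ → ℝ := fun x => deriv Ψ x + C * x
  have hγ : Monotone γ :=
    monotone_deriv_add_mul_id ((contDiff_succ_iff_deriv.mp hΨ).2.2.differentiable one_ne_zero) hΨ''
  have hγ0 : γ 0 = 0 := by simp [γ, hΨ'0]
  have hres : IsResolvent γ l (J l) := hJ l hl
  have hcmp : ∫ s in (0:ℝ)..r, γ (J l s) ≤ ∫ s in (0:ℝ)..r, γ s :=
    integral_le_of_le_of_nonneg_of_le_of_nonpos
      (hγ.comp (hres.monotone hγ hl.le)).intervalIntegrable hγ.intervalIntegrable
      (fun _ => hres.comp_le_of_nonneg hγ hl.le hγ0) (fun _ => hres.le_comp_of_nonpos hγ hl.le hγ0)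
  rw [integral_congr fun s _ => hres.sub_div_eq hl.ne' s]
  have hint := integral_deriv_add_mul_id C (hΨ.of_le (by norm_num)) 0 r
  simp only [γ] at hcmp
  linarith

/-- The approximated potential lies below the original one: `Ψ_λ(r) ≤ Ψ(r)`
for all `λ > 0` and `r ∈ ℝ`. -/
theorem approx_potential_le
    (Ψ : ℝ → ℝ) (C : ℝ) (hC : 0 < C)
    (hΨ : ContDiff ℝ 2 Ψ) (hΨ'0 : deriv Ψ 0 = 0)
    (hΨ'' : ∀ x : ℝ, -C ≤ deriv (deriv Ψ) x)
    (J : ℝ → ℝ → ℝ)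
    (hJ : ∀ l : ℝ, 0 < l → ∀ r : ℝ,
      J l r + l * (deriv Ψ (J l r) + C * J l r) = r)
    (l : ℝ) (hl : 0 < l) (r : ℝ) :
    Ψ 0 - C / 2 * r ^ 2 + (∫ s in (0:ℝ)..r, (s - J l s) / l) ≤ Ψ r :=
  approx_potential_le_general Ψ C hΨ hΨ'0 hΨ'' J hJ l hl r
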